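/- arXiv:1605.09203 — 3 statements merged into one kernel-verified Lean document; each statement's English description precedes it below -/
import Mathlib

section
/- A closed disc with two opposite boundary arcs 'chopped' by parallel chords (i.e., the intersection of a closed disc of radius r with a strip |y| ≤ h where 0 < h < r) does not tile the plane. -/
open Metric Set

/-- The Euclidean plane. -/
abbrev Plane := EuclideanSpace ℝ (Fin 2)

/-- `S` is a congruent (isometric) copy of `R`. -/
def IsCopy (R S : Set Plane) : Prop := ∃ f : Plane ≃ᵢ Plane, S = f '' R

/-- A subset of the plane is simply connected. -/
def SimplyConn (S : Set Plane) : Prop := SimplyConnectedSpace S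

/-- `W` is a wall built from copies of `R`: a simply connected union of infinitely many
congruent copies of `R` with pairwise disjoint interiors, whose complement consists of
exactly two simply connected connected regions lying a positive distance apart. -/
def IsWall (R W : Set Plane) : Prop :=
  (∃ C : Set (Set Plane), C.Infinite ∧ (∀ S ∈ C, IsCopy R S) ∧
      (C.Pairwise fun S T => Disjoint (interior S) (interior T)) ∧ W = ⋃₀ C) ∧
  SimplyConn W ∧
  ∃ A B : Set Plane, Wᶜ = A ∪ B ∧ Disjoint A B ∧ A.Nonempty ∧ B.Nonempty ∧
    IsConnected A ∧ IsConnected B ∧ SimplyConn A ∧ SimplyConn B ∧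
    ∃ d : ℝ, 0 < d ∧ ∀ a ∈ A, ∀ b ∈ B, d ≤ dist a b

/-- `W` is a union of `n` walls built from copies of `R` which pairwise share only
boundary points. -/
def IsWallUnion (R : Set Plane) (n : ℕ) (W : Set Plane) : Prop :=
  ∃ Ws : Fin n → Set Plane, (∀ i, IsWall R (Ws i)) ∧
    (Pairwise fun i j => Disjoint (interior (Ws i)) (interior (Ws j))) ∧
    W = ⋃ i, Ws i

/-- `W` is a wall of thickness (exactly) `n`. -/
def HasThickness (R : Set Plane) (n : ℕ) (W : Set Plane) : Prop :=
  IsWallUnion R n W ∧ ¬ IsWallUnion R (n + 1) W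

/-- A central copy of `R` can be surrounded by `n` successive full layers (coronas) of
congruent copies of `R` with pairwise disjoint interiors: the union of the configuration
up to each layer is contained in the interior of the union up to the next layer.
`CanSurround R n` expresses that the Heesch number of `R` is at least `n`. -/
def CanSurround (R : Set Plane) (n : ℕ) : Prop :=
  ∃ (C : Set Plane) (L : Fin n → Set (Set Plane)),
    IsCopy R C ∧ (∀ i, (L i).Finite) ∧ (∀ i, (L i).Nonempty) ∧
    (∀ i, ∀ S ∈ L i, IsCopy R S) ∧
    (({C} ∪ ⋃ i, L i).Pairwise fun S T => Disjoint (interior S) (interior T)) ∧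
    ∀ k : Fin n, (C ∪ ⋃ j : Fin n, ⋃ (_ : j < k), ⋃₀ L j) ⊆
      interior (C ∪ ⋃ j : Fin n, ⋃ (_ : j ≤ k), ⋃₀ L j)

/-- `R` tiles the plane by congruent copies with pairwise disjoint interiors. -/
def TilesPlane (R : Set Plane) : Prop :=
  ∃ C : Set (Set Plane), (∀ S ∈ C, IsCopy R S) ∧
    (C.Pairwise fun S T => Disjoint (interior S) (interior T)) ∧ ⋃₀ C = univ

namespace ChoppedDiscAux
open MeasureTheory Filter

noncomputable def pt (x y : ℝ) : Plane := (WithLp.equiv 2 (Fin 2 → ℝ)).symm ![x, y]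

@[simp] lemma pt_zero (x y : ℝ) : pt x y 0 = x := by simp [pt]
@[simp] lemma pt_one (x y : ℝ) : pt x y 1 = y := by simp [pt]

lemma norm_sq_eq (p : Plane) : ‖p‖ ^ 2 = p 0 ^ 2 + p 1 ^ 2 := by
  rw [EuclideanSpace.norm_eq, Real.sq_sqrt (by positivity)]
  simp [Fin.sum_univ_two, Real.norm_eq_abs, sq_abs]

/-- The chopped disc. -/
def Rset (r h : ℝ) : Set Plane := {p : Plane | p 0 ^ 2 + p 1 ^ 2 ≤ r ^ 2 ∧ |p 1| ≤ h}

lemma Rset_subset_closedBall {r h : ℝ} (hr : 0 < r) :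
    Rset r h ⊆ Metric.closedBall (0 : Plane) r := by
  intro p hp
  rw [Metric.mem_closedBall, dist_zero_right]
  nlinarith [norm_sq_eq p, norm_nonneg p, hp.1]

lemma ball_subset_Rset {r h : ℝ} (hh : 0 < h) (hr : h < r) :
    Metric.ball (0 : Plane) h ⊆ Rset r h := by
  intro p hp
  rw [Metric.mem_ball, dist_zero_right] at hp
  have h1 := norm_sq_eq p
  have h2 : |p 1| ≤ ‖p‖ := by
    nlinarith [abs_nonneg (p 1), norm_nonneg p, sq_abs (p 1)]
  exact ⟨by nlinarith [norm_nonneg p], by linarith⟩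

lemma slab_convex (h : ℝ) : Convex ℝ {p : Plane | |p 1| ≤ h} := by
  intro x hx y hy a b ha hb hab
  simp only [Set.mem_setOf_eq] at hx hy ⊢
  have : (a • x + b • y) 1 = a * x 1 + b * y 1 := by
    simp [PiLp.add_apply, PiLp.smul_apply]
  rw [this]
  calc |a * x 1 + b * y 1| ≤ |a * x 1| + |b * y 1| := abs_add_le _ _
    _ = a * |x 1| + b * |y 1| := by
        rw [abs_mul, abs_mul, abs_of_nonneg ha, abs_of_nonneg hb]
    _ ≤ a * h + b * h := by gcongr <;> assumption
    _ = h := by rw [← add_mul, hab, one_mul]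

lemma Rset_eq {r h : ℝ} (hr : 0 < r) :
    Rset r h = Metric.closedBall (0 : Plane) r ∩ {p : Plane | |p 1| ≤ h} := by
  ext p
  simp only [Rset, Set.mem_inter_iff, Set.mem_setOf_eq, Metric.mem_closedBall, dist_zero_right]
  constructor
  · rintro ⟨h1, h2⟩
    exact ⟨by nlinarith [norm_sq_eq p, norm_nonneg p], h2⟩
  · rintro ⟨h1, h2⟩
    exact ⟨by nlinarith [norm_sq_eq p, norm_nonneg p], h2⟩

lemma Rset_convex {r h : ℝ} (hr : 0 < r) : Convex ℝ (Rset r h) := by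
  rw [Rset_eq hr]
  exact (convex_closedBall _ _).inter (slab_convex h)

lemma cont_coord (i : Fin 2) : Continuous fun p : Plane => p i :=
  (EuclideanSpace.proj i).continuous

lemma Rset_compact {r h : ℝ} (hr : 0 < r) : IsCompact (Rset r h) := by
  have hclosed : IsClosed (Rset r h) := by
    have h1 : IsClosed {p : Plane | p 0 ^ 2 + p 1 ^ 2 ≤ r ^ 2} :=
      isClosed_le (((cont_coord 0).pow 2).add ((cont_coord 1).pow 2)) continuous_const
    have h2 : IsClosed {p : Plane | |p 1| ≤ h} :=
      isClosed_le (continuous_abs.comp (cont_coord 1)) continuous_const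
    exact h1.inter h2
  exact (isCompact_closedBall (0 : Plane) r).of_isClosed_subset hclosed
    (Rset_subset_closedBall hr)

/-- A point on the circular arc of the chopped disc. -/
noncomputable def arc (r t : ℝ) : Plane := pt (Real.sqrt (r ^ 2 - t ^ 2)) t

lemma arc_sq {r t : ℝ} (ht : t ^ 2 ≤ r ^ 2) :
    (arc r t) 0 ^ 2 + (arc r t) 1 ^ 2 = r ^ 2 := by
  simp only [arc, pt_zero, pt_one]
  rw [Real.sq_sqrt (by linarith)]
  ring

lemma arc_norm {r t : ℝ} (hr : 0 < r) (ht : t ^ 2 ≤ r ^ 2) : ‖arc r t‖ = r := by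
  have h1 : ‖arc r t‖ ^ 2 = r ^ 2 := by rw [norm_sq_eq]; exact arc_sq ht
  nlinarith [norm_nonneg (arc r t)]

lemma arc_mem {r h t : ℝ} (hh : 0 < h) (hr : h < r) (ht : t ∈ Set.Ioo 0 h) :
    arc r t ∈ Rset r h := by
  refine ⟨le_of_eq (arc_sq (by nlinarith [ht.1, ht.2])), ?_⟩
  simp only [arc, pt_one]
  rw [abs_of_pos ht.1]
  exact ht.2.le

lemma midpoint_mem_interior {r h t₁ t₂ : ℝ} (hh : 0 < h) (hr : h < r)
    (h₁ : t₁ ∈ Set.Ioo 0 h) (h₂ : t₂ ∈ Set.Ioo 0 h) (hne : t₁ ≠ t₂) :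
    midpoint ℝ (arc r t₁) (arc r t₂) ∈ interior (Rset r h) := by
  have h0r : 0 < r := hh.trans hr
  set u := arc r t₁
  set v := arc r t₂
  have hu : ‖u‖ = r := arc_norm h0r (by nlinarith [h₁.1, h₁.2])
  have hv : ‖v‖ = r := arc_norm h0r (by nlinarith [h₂.1, h₂.2])
  have huv : u ≠ v := by
    intro hEq
    apply hne
    have : u 1 = v 1 := by rw [hEq]
    simpa [u, v, arc] using this
  have hmid : midpoint ℝ u v = (2⁻¹ : ℝ) • (u + v) := by
    rw [midpoint_eq_smul_add]; norm_num
  have hnlt : ‖midpoint ℝ u v‖ < r := by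
    have hsub : 0 < ‖u - v‖ := by
      rw [norm_pos_iff, sub_ne_zero]; exact huv
    have hpar := parallelogram_law_with_norm ℝ u v
    have hn : ‖midpoint ℝ u v‖ = 2⁻¹ * ‖u + v‖ := by
      rw [hmid, norm_smul, Real.norm_eq_abs]
      norm_num
    rw [hn]
    nlinarith [norm_nonneg (u + v), norm_nonneg (u - v)]
  have hcoord : |(midpoint ℝ u v) 1| < h := by
    have : (midpoint ℝ u v) 1 = 2⁻¹ * (t₁ + t₂) := by
      rw [hmid]
      have : ((2⁻¹ : ℝ) • (u + v)) 1 = 2⁻¹ * (u 1 + v 1) := by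
        simp [PiLp.add_apply, PiLp.smul_apply, mul_add]
      rw [this]
      simp [u, v, arc]
    rw [this, abs_lt]
    constructor <;> nlinarith [h₁.1, h₁.2, h₂.1, h₂.2]
  have hsub : Metric.ball (0 : Plane) r ∩ {p : Plane | |p 1| < h} ⊆ interior (Rset r h) := by
    apply interior_maximal
    · intro p hp
      rw [Set.mem_inter_iff, Metric.mem_ball, dist_zero_right] at hp
      refine ⟨by nlinarith [norm_sq_eq p, norm_nonneg p, hp.1], hp.2.le⟩
    · exact Metric.isOpen_ball.inter
        (isOpen_lt (continuous_abs.comp (cont_coord 1)) continuous_const)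
  exact hsub ⟨by rwa [Metric.mem_ball, dist_zero_right], hcoord⟩

end ChoppedDiscAux

open ChoppedDiscAux MeasureTheory Filter Topology

/-- A closed disc of radius `r` chopped by two parallel chords `|y| ≤ h` (with
`0 < h < r`) does not tile the plane. -/
theorem chopped_disc_not_tile (r h : ℝ) (hh : 0 < h) (hr : h < r) :
    ¬ TilesPlane {p : Plane | p 0 ^ 2 + p 1 ^ 2 ≤ r ^ 2 ∧ |p 1| ≤ h} := by
  have h0r : 0 < r := hh.trans hr
  rintro ⟨C, hcopy, hdisj, hcover⟩
  have hRdef : {p : Plane | p 0 ^ 2 + p 1 ^ 2 ≤ r ^ 2 ∧ |p 1| ≤ h} = Rset r h := rfl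
  rw [hRdef] at hcopy
  -- pick a tile T
  have h0cov : (0 : Plane) ∈ ⋃₀ C := hcover.symm ▸ mem_univ _
  obtain ⟨T, hTC, -⟩ := mem_sUnion.1 h0cov
  obtain ⟨f, hfT⟩ := hcopy T hTC
  set c₀ : Plane := f 0 with hc₀
  -- the finite family of tiles near T
  set G : Set (Set Plane) := {S | S ∈ C ∧ (S ∩ closedBall c₀ (2 * r)).Nonempty} with hGdef
  -- each tile in G contains a ball of radius h inside its interior, within a fixed big ball
  have key : ∀ S : Set Plane, ∃ y : Plane, S ∈ G →
      ball y h ⊆ interior S ∧ ball y h ⊆ closedBall c₀ (4 * r) := by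
    intro S
    by_cases hS : S ∈ G
    · obtain ⟨hSC, x, hxS, hxB⟩ := hS
      obtain ⟨g, rfl⟩ := hcopy S hSC
      refine ⟨g 0, fun _ => ⟨?_, ?_⟩⟩
      · have hsub : ball (g 0) h ⊆ g '' Rset r h := by
          rw [← g.image_ball]
          exact image_mono (ball_subset_Rset hh hr)
        exact interior_maximal hsub isOpen_ball
      · obtain ⟨u, huR, rfl⟩ := hxS
        have hd1 : dist (g 0) (g u) ≤ r := by
          rw [g.dist_eq, dist_comm, dist_zero_right]
          have := Rset_subset_closedBall (h := h) h0r huR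
          rwa [mem_closedBall, dist_zero_right] at this
        have hd2 : dist (g u) c₀ ≤ 2 * r := by rwa [mem_closedBall] at hxB
        intro z hz
        rw [mem_ball] at hz
        rw [mem_closedBall]
        calc dist z c₀ ≤ dist z (g 0) + dist (g 0) (g u) + dist (g u) c₀ := dist_triangle4 _ _ _ _
          _ ≤ h + r + 2 * r := by linarith
          _ ≤ 4 * r := by linarith
    · exact ⟨0, fun hS' => absurd hS' hS⟩
  choose y hy using key
  -- G is finite (measure argument)
  have hGfin : G.Finite := by
    by_contra hGinf
    have hGinf' : G.Infinite := hGinf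
    have hε0 : 0 < volume (ball (0 : Plane) h) := measure_ball_pos _ _ hh
    have hεt : volume (ball (0 : Plane) h) ≠ ⊤ := measure_ball_lt_top.ne
    have hMt : volume (closedBall c₀ (4 * r)) ≠ ⊤ := measure_closedBall_lt_top.ne
    obtain ⟨n, hn⟩ := ENNReal.exists_nat_gt
      (show volume (closedBall c₀ (4 * r)) / volume (ball (0 : Plane) h) ≠ ⊤ from
        (ENNReal.div_lt_top hMt hε0.ne').ne)
    rw [ENNReal.div_lt_iff (Or.inl hε0.ne') (Or.inl hεt)] at hn
    obtain ⟨F, hFsub, hFcard⟩ := hGinf'.exists_subset_card_eq n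
    have hdisjballs : (↑F : Set (Set Plane)).PairwiseDisjoint fun S => ball (y S) h := by
      intro S hS S' hS' hne
      have hSG := hFsub hS
      have hS'G := hFsub hS'
      exact Disjoint.mono (hy S hSG).1 (hy S' hS'G).1
        (hdisj hSG.1 hS'G.1 hne)
    have hmeas : volume (⋃ S ∈ F, ball (y S) h) = ∑ S ∈ F, volume (ball (y S) h) :=
      measure_biUnion_finset hdisjballs (fun _ _ => measurableSet_ball)
    have hsum : ∑ S ∈ F, volume (ball (y S) h) = n * volume (ball (0 : Plane) h) := by
      rw [Finset.sum_congr rfl (fun S hS => Measure.addHaar_ball_center volume (y S) h)]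
      rw [Finset.sum_const, hFcard, nsmul_eq_mul]
    have hbound : volume (⋃ S ∈ F, ball (y S) h) ≤ volume (closedBall c₀ (4 * r)) := by
      apply measure_mono
      intro z hz
      rw [mem_iUnion₂] at hz
      obtain ⟨S, hS, hzS⟩ := hz
      exact (hy S (hFsub hS)).2 hzS
    rw [hmeas, hsum] at hbound
    exact absurd hn (not_lt.2 hbound)
  -- pigeonhole: any sequence of tiles in G has an infinitely-repeated value
  have pigeon : ∀ Sq : ℕ → Set Plane, (∀ n, Sq n ∈ G) →
      ∃ U ∈ G, {n | Sq n = U}.Infinite := by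
    intro Sq hmem
    by_contra hcon
    push_neg at hcon
    have hfin : (univ : Set ℕ).Finite := by
      have hsub : (univ : Set ℕ) ⊆ ⋃ U ∈ G, {n | Sq n = U} :=
        fun n _ => mem_biUnion (hmem n) rfl
      exact ((hGfin.biUnion (fun U hU => hcon U hU)).subset hsub)
    exact absurd infinite_univ hfin.not_infinite
  -- every arc point of T lies in some other tile of G
  have claim : ∀ t : ℝ, ∃ S : Set Plane, t ∈ Ioo 0 h →
      S ∈ G ∧ S ≠ T ∧ f (arc r t) ∈ S := by
    intro t
    by_cases ht : t ∈ Ioo 0 h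
    swap
    · exact ⟨∅, fun ht' => absurd ht' ht⟩
    have ht2 : t ^ 2 ≤ r ^ 2 := by nlinarith [ht.1, ht.2]
    have hnorm : ‖arc r t‖ = r := arc_norm h0r ht2
    set q : ℕ → Plane := fun n => f ((1 + 1 / ((n : ℝ) + 1)) • arc r t) with hq
    have hc1 : ∀ n : ℕ, (1 : ℝ) < 1 + 1 / ((n : ℝ) + 1) := by
      intro n
      have : (0 : ℝ) < 1 / ((n : ℝ) + 1) := by positivity
      linarith
    have hc2 : ∀ n : ℕ, (1 : ℝ) + 1 / ((n : ℝ) + 1) ≤ 2 := by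
      intro n
      have hn1 : (1 : ℝ) ≤ (n : ℝ) + 1 := by
        have : (0 : ℝ) ≤ (n : ℝ) := Nat.cast_nonneg n
        linarith
      have : 1 / ((n : ℝ) + 1) ≤ 1 := by
        rw [div_le_one (by linarith)]
        linarith
      linarith
    have hqT : ∀ n, q n ∉ T := by
      intro n hqn
      rw [hfT] at hqn
      obtain ⟨u, huR, hu⟩ := hqn
      have hueq : u = (1 + 1 / ((n : ℝ) + 1)) • arc r t := f.injective hu
      rw [hueq] at huR
      have h1 := huR.1
      have hco : ∀ i : Fin 2, ((1 + 1 / ((n : ℝ) + 1)) • arc r t) i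
          = (1 + 1 / ((n : ℝ) + 1)) * arc r t i := fun i => rfl
      rw [hco 0, hco 1] at h1
      have harc := arc_sq ht2
      have hceq : ((1 + 1 / ((n : ℝ) + 1)) * arc r t 0) ^ 2
          + ((1 + 1 / ((n : ℝ) + 1)) * arc r t 1) ^ 2
          = (1 + 1 / ((n : ℝ) + 1)) ^ 2 * r ^ 2 := by rw [← harc]; ring
      rw [hceq] at h1
      have hcsq : 1 < (1 + 1 / ((n : ℝ) + 1)) ^ 2 := by nlinarith [hc1 n]
      nlinarith [pow_pos h0r 2]
    have hqB : ∀ n, q n ∈ closedBall c₀ (2 * r) := by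
      intro n
      rw [mem_closedBall, hq]
      have : dist (f ((1 + 1 / ((n : ℝ) + 1)) • arc r t)) (f 0)
          = ‖(1 + 1 / ((n : ℝ) + 1)) • arc r t‖ := by
        rw [f.dist_eq, dist_zero_right]
      rw [hc₀, this, norm_smul, Real.norm_eq_abs,
        abs_of_pos (lt_trans one_pos (hc1 n)), hnorm]
      nlinarith [hc1 n, hc2 n]
    have hscov : ∀ n, ∃ S ∈ C, q n ∈ S := by
      intro n
      exact mem_sUnion.1 (hcover.symm ▸ mem_univ (q n))
    choose Sq hSqC hSqmem using hscov
    have hSqG : ∀ n, Sq n ∈ G := fun n => ⟨hSqC n, ⟨q n, hSqmem n, hqB n⟩⟩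
    obtain ⟨U, hUG, hUinf⟩ := pigeon Sq hSqG
    refine ⟨U, fun _ => ⟨hUG, ?_, ?_⟩⟩
    · obtain ⟨n, hn⟩ := hUinf.nonempty
      intro hUT
      exact hqT n (by rw [← hUT, ← hn]; exact hSqmem n)
    · have hUclosed : IsClosed U := by
        obtain ⟨g, hg⟩ := hcopy U hUG.1
        rw [hg]
        exact ((Rset_compact (h := h) h0r).image g.continuous).isClosed
      have htend : Tendsto q atTop (𝓝 (f (arc r t))) := by
        have h1 : Tendsto (fun n : ℕ => (1 : ℝ) + 1 / ((n : ℝ) + 1)) atTop (𝓝 1) := by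
          have := tendsto_one_div_add_atTop_nhds_zero_nat (𝕜 := ℝ)
          have h2 := tendsto_const_nhds (x := (1 : ℝ)) (f := atTop (α := ℕ)) |>.add this
          simpa using h2
        have h2 : Tendsto (fun n : ℕ => (1 + 1 / ((n : ℝ) + 1)) • arc r t) atTop
            (𝓝 (arc r t)) := by
          have := h1.smul_const (arc r t)
          simpa using this
        exact (f.continuous.tendsto _).comp h2
      have hfreq : ∃ᶠ n in atTop, q n ∈ U := by
        rw [Nat.frequently_atTop_iff_infinite]
        apply hUinf.mono
        intro n hn
        rw [mem_setOf_eq] at hn ⊢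
        rw [← hn]
        exact hSqmem n
      have := mem_closure_of_frequently_of_tendsto hfreq htend
      rwa [hUclosed.closure_eq] at this
  choose St hSt using claim
  -- distinct arc points lie in distinct tiles
  have hinj : InjOn St (Ioo 0 h) := by
    intro t₁ h₁ t₂ h₂ heq
    by_contra hne
    obtain ⟨hG₁, hT₁, hmem₁⟩ := hSt t₁ h₁
    obtain ⟨hG₂, hT₂, hmem₂⟩ := hSt t₂ h₂
    set S := St t₁ with hSdef
    have hmem₂' : f (arc r t₂) ∈ S := by rw [heq]; exact hmem₂
    set m := midpoint ℝ (arc r t₁) (arc r t₂) with hm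
    have hmid_int : m ∈ interior (Rset r h) := midpoint_mem_interior hh hr h₁ h₂ hne
    have hfm_intT : f m ∈ interior T := by
      rw [hfT]
      have himg := f.toHomeomorph.image_interior (Rset r h)
      simp only [IsometryEquiv.coe_toHomeomorph] at himg
      rw [← himg]
      exact mem_image_of_mem f hmid_int
    obtain ⟨g, hg⟩ := hcopy S hG₁.1
    obtain ⟨u₁, hu₁, hgu₁⟩ := hg ▸ hmem₁
    obtain ⟨u₂, hu₂, hgu₂⟩ := hg ▸ hmem₂'
    have hfm_S : f m ∈ S := by
      rw [hm, f.map_midpoint, ← hgu₁, ← hgu₂, ← g.map_midpoint, hg]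
      refine mem_image_of_mem g ?_
      exact (Rset_convex (h := h) h0r).segment_subset hu₁ hu₂ (midpoint_mem_segment u₁ u₂)
    have hSconv : Convex ℝ S := by
      rw [hg]
      have := (Rset_convex (h := h) h0r).affine_image
        g.toRealAffineIsometryEquiv.toAffineEquiv.toAffineMap
      simpa using this
    have hSint : ball (g 0) h ⊆ interior S := by
      rw [hg]
      have hsub : ball (g 0) h ⊆ g '' Rset r h := by
        rw [← g.image_ball]
        exact image_mono (ball_subset_Rset hh hr)
      exact interior_maximal hsub isOpen_ball
    set z := g 0 with hz
    have hzint : z ∈ interior S := hSint (mem_ball_self hh)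
    set x := f m with hx
    obtain ⟨δ, hδ, hball⟩ := Metric.isOpen_iff.1 isOpen_interior x hfm_intT
    set N := ‖z - x‖ with hN
    have hN0 : 0 ≤ N := norm_nonneg _
    set τ := min 1 (δ / (2 * (N + 1))) with hτdef
    have hτ : τ ∈ Ioc (0 : ℝ) 1 := ⟨lt_min one_pos (by positivity), min_le_left _ _⟩
    have hxS : x + τ • (z - x) ∈ interior S :=
      hSconv.add_smul_sub_mem_interior hfm_S hzint hτ
    have hxT : x + τ • (z - x) ∈ interior T := by
      apply hball
      rw [mem_ball, dist_eq_norm]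
      have : x + τ • (z - x) - x = τ • (z - x) := by abel
      rw [this, norm_smul, Real.norm_eq_abs, abs_of_pos hτ.1, ← hN]
      have hτle : τ ≤ δ / (2 * (N + 1)) := min_le_right _ _
      have : τ * N ≤ δ / (2 * (N + 1)) * N := by
        apply mul_le_mul_of_nonneg_right hτle hN0
      have hlt : δ / (2 * (N + 1)) * N < δ := by
        rw [div_mul_eq_mul_div, div_lt_iff₀ (by positivity)]
        nlinarith
      linarith
    have hdisjST : Disjoint (interior S) (interior T) :=
      hdisj hG₁.1 hTC hT₁
    exact Set.disjoint_left.1 hdisjST hxS hxT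
  -- contradiction: infinitely many arc parameters, finitely many tiles
  have himgfin : (St '' Ioo 0 h).Finite := by
    apply hGfin.subset
    rintro S ⟨t, ht, rfl⟩
    exact (hSt t ht).1
  exact absurd (Set.Finite.of_finite_image himgfin hinj) (Set.Ioo_infinite hh)
end

section
/- The convex region formed by attaching a closed half-disc of diameter 1 to one side of a unit square does not tile the plane. -/
open Metric Set

namespace SqHD

open MeasureTheory Pointwise

def pt (a b : ℝ) : Plane := WithLp.toLp 2 ![a, b]
@[simp] lemma pt0 (a b : ℝ) : pt a b 0 = a := rfl
@[simp] lemma pt1 (a b : ℝ) : pt a b 1 = b := rfl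

lemma plane_ext {x y : Plane} (h0 : x 0 = y 0) (h1 : x 1 = y 1) : x = y := by
  ext i; fin_cases i <;> assumption

lemma dist_eq' (x y : Plane) :
    dist x y = Real.sqrt ((x 0 - y 0)^2 + (x 1 - y 1)^2) := by
  rw [EuclideanSpace.dist_eq, Fin.sum_univ_two]
  simp [Real.dist_eq, sq_abs]

lemma dist_le_iff' {x y : Plane} {r : ℝ} (hr : 0 ≤ r) :
    dist x y ≤ r ↔ (x 0 - y 0)^2 + (x 1 - y 1)^2 ≤ r^2 := by
  rw [dist_eq', Real.sqrt_le_left hr]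

lemma dist_lt_iff' {x y : Plane} {r : ℝ} (hr : 0 < r) :
    dist x y < r ↔ (x 0 - y 0)^2 + (x 1 - y 1)^2 < r^2 := by
  rw [dist_eq', Real.sqrt_lt' hr]

noncomputable def c : Plane := pt (1/2) 0
noncomputable def w : Plane := pt (1/2) (1/2)

lemma mem_D {p : Plane} : p ∈ Metric.closedBall c (1/2) ↔ (p 0 - 1/2)^2 + p 1^2 ≤ 1/4 := by
  rw [Metric.mem_closedBall, dist_le_iff' (by norm_num)]
  norm_num [c]

lemma smul_add_apply (a b : ℝ) (x y : Plane) (i : Fin 2) :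
    (a • x + b • y) i = a * x i + b * y i := rfl

lemma mix {x y : Plane} {a b : ℝ} (hx0 : 0 ≤ x 0) (hx0' : x 0 ≤ 1) (hx1 : 0 ≤ x 1)
    (hy : y ∈ Metric.closedBall c (1/2)) (ha : 0 ≤ a) (hb : 0 ≤ b) (hab : a + b = 1)
    (hz : a * x 1 + b * y 1 < 0) : a • x + b • y ∈ Metric.closedBall c (1/2) := by
  have hb' : b = 1 - a := by linarith
  subst hb'
  have hyD := mem_D.mp hy
  have hy0 : 0 ≤ y 0 := by nlinarith
  have hy0' : y 0 ≤ 1 := by nlinarith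
  rcases eq_or_lt_of_le hx1 with h0 | h0
  · have hxD : x ∈ Metric.closedBall c (1/2) := mem_D.mpr (by nlinarith)
    exact convex_closedBall c (1/2) hxD hy ha hb hab
  · have hy1 : y 1 < 0 := by nlinarith
    set s : ℝ := -(y 1) / (x 1 - y 1) with hs
    have hden : 0 < x 1 - y 1 := by linarith
    have hs0 : 0 < s := div_pos (by linarith) hden
    have hs1 : s < 1 := by rw [hs, div_lt_one hden]; linarith
    set W : Plane := s • x + (1 - s) • y with hW
    have hW1 : W 1 = 0 := by
      have := smul_add_apply s (1 - s) x y 1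
      rw [hW, this, hs]; field_simp; ring
    have hW0a : 0 ≤ W 0 := by
      have := smul_add_apply s (1 - s) x y 0
      rw [hW, this]; nlinarith
    have hW0b : W 0 ≤ 1 := by
      have := smul_add_apply s (1 - s) x y 0
      rw [hW, this]; nlinarith
    have hWD : W ∈ Metric.closedBall c (1/2) := mem_D.mpr (by rw [hW1]; nlinarith)
    have hcoef : a / s ≤ 1 := by
      rw [div_le_one hs0, hs, le_div_iff₀ hden]; nlinarith
    have hz' : a • x + (1 - a) • y = (a / s) • W + (1 - a / s) • y := by
      apply plane_ext <;>
      · rw [smul_add_apply, smul_add_apply, hW, smul_add_apply]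
        field_simp
        ring
    rw [hz']
    exact convex_closedBall c (1/2) hWD hy (by positivity) (by linarith) (by ring)

def R₀ : Set Plane := {p : Plane | 0 ≤ p 0 ∧ p 0 ≤ 1 ∧ 0 ≤ p 1 ∧ p 1 ≤ 1} ∪
      {p : Plane | (p 0 - 1 / 2) ^ 2 + p 1 ^ 2 ≤ 1 / 4 ∧ p 1 ≤ 0}

lemma convex_R₀ : Convex ℝ R₀ := by
  intro x hx y hy a b ha hb hab
  have key : ∀ u : Plane, u ∈ R₀ → (0 ≤ u 0 ∧ u 0 ≤ 1 ∧ u 1 ≤ 1) := by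
    rintro u (⟨h1, h2, h3, h4⟩ | ⟨h1, h2⟩)
    · exact ⟨h1, h2, h4⟩
    · refine ⟨by nlinarith, by nlinarith, by nlinarith⟩
  obtain ⟨hx0, hx0', hx1'⟩ := key x hx
  obtain ⟨hy0, hy0', hy1'⟩ := key y hy
  have hz0 : (a • x + b • y) 0 = a * x 0 + b * y 0 := rfl
  have hz1 : (a • x + b • y) 1 = a * x 1 + b * y 1 := rfl
  rcases le_or_gt 0 ((a • x + b • y) 1) with hzpos | hzneg
  · exact Or.inl ⟨by rw [hz0]; nlinarith, by rw [hz0]; nlinarith, hzpos,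
      by rw [hz1]; nlinarith⟩
  · rw [hz1] at hzneg
    have hfin : a • x + b • y ∈ Metric.closedBall c (1/2) → a • x + b • y ∈ R₀ := by
      intro h; right
      have := mem_D.mp h
      exact ⟨by norm_num at this ⊢; linarith, by rw [hz1]; linarith⟩
    apply hfin
    rcases hx with hxs | hxd <;> rcases hy with hys | hyd
    · exfalso; nlinarith [hxs.2.2.1, hys.2.2.1]
    · exact mix hxs.1 hxs.2.1 hxs.2.2.1 (mem_D.mpr (by norm_num at hyd ⊢; linarith [hyd.1])) ha hb hab hzneg
    · rw [add_comm (a • x)]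
      exact mix hys.1 hys.2.1 hys.2.2.1 (mem_D.mpr (by norm_num at hxd ⊢; linarith [hxd.1])) hb ha (by linarith) (by linarith)
    · exact convex_closedBall c (1/2) (mem_D.mpr (by norm_num at hxd ⊢; linarith [hxd.1]))
        (mem_D.mpr (by norm_num at hyd ⊢; linarith [hyd.1])) ha hb hab

lemma closedBall_c_subset : Metric.closedBall c (1/2) ⊆ R₀ := by
  intro p hp
  rw [mem_D] at hp
  rcases le_or_gt (p 1) 0 with h | h
  · exact Or.inr ⟨by norm_num; nlinarith, h⟩
  · exact Or.inl ⟨by nlinarith, by nlinarith, h.le, by nlinarith⟩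

lemma ball_w_subset : Metric.ball w (1/2) ⊆ R₀ := by
  intro p hp
  rw [Metric.mem_ball, dist_lt_iff' (by norm_num)] at hp
  simp only [w, pt0, pt1] at hp
  exact Or.inl ⟨by nlinarith, by nlinarith, by nlinarith, by nlinarith⟩

lemma R₀_subset_closedBall : R₀ ⊆ Metric.closedBall w 2 := by
  intro p hp
  rw [Metric.mem_closedBall, dist_le_iff' (by norm_num)]
  simp only [w, pt0, pt1]
  rcases hp with ⟨h1, h2, h3, h4⟩ | ⟨h1, h2⟩
  · nlinarith
  · norm_num at h1; nlinarith

lemma not_mem_R₀ {p : Plane} (h1 : p 1 < 0) (h2 : 1/4 < (p 0 - 1/2)^2 + p 1^2) :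
    p ∉ R₀ := by
  rintro (⟨_, _, h3, _⟩ | ⟨h3, _⟩)
  · exact absurd h3 (not_le.mpr h1)
  · norm_num at h3 h2; linarith

lemma interior_copy (g : Plane ≃ᵢ Plane) (A : Set Plane) :
    interior (g '' A) = g '' interior A := by
  rw [← IsometryEquiv.coe_toHomeomorph, Homeomorph.image_interior]

lemma coe_aff (g : Plane ≃ᵢ Plane) :
    ⇑g.toRealAffineIsometryEquiv.toAffineEquiv.toAffineMap = ⇑g := by
  ext p : 1; simp

lemma convex_copy (g : Plane ≃ᵢ Plane) {A : Set Plane} (hA : Convex ℝ A) :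
    Convex ℝ (g '' A) := by
  rw [← coe_aff g]
  exact hA.affine_image g.toRealAffineIsometryEquiv.toAffineEquiv.toAffineMap

lemma midpoint_copy (g : Plane ≃ᵢ Plane) (a b : Plane) :
    g (midpoint ℝ a b) = midpoint ℝ (g a) (g b) := by
  rw [← coe_aff g]
  exact g.toRealAffineIsometryEquiv.toAffineEquiv.toAffineMap.map_midpoint a b

lemma finite_tiles (C : Set (Set Plane)) (hcopy : ∀ S ∈ C, IsCopy R₀ S)
    (hdisj : C.Pairwise fun S T => Disjoint (interior S) (interior T))
    (z : Plane) : {T | T ∈ C ∧ (T ∩ Metric.closedBall z 1).Nonempty}.Finite := by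
  rw [← Set.not_infinite]
  intro hinf
  set F := {T | T ∈ C ∧ (T ∩ Metric.closedBall z 1).Nonempty} with hF
  let e := hinf.natEmbedding
  set T : ℕ → Set Plane := fun n => (e n : Set Plane) with hT
  have hTC : ∀ n, T n ∈ C := fun n => (e n).2.1
  have hTK : ∀ n, ((T n) ∩ Metric.closedBall z 1).Nonempty := fun n => (e n).2.2
  have hne : ∀ m n, m ≠ n → T m ≠ T n := by
    intro m n h hEq
    exact h (e.injective (Subtype.ext hEq))
  choose g hg using fun n => hcopy (T n) (hTC n)
  set x : ℕ → Plane := fun n => g n w with hx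
  have hballw : Metric.ball w (1/2) ⊆ interior R₀ :=
    interior_maximal ball_w_subset Metric.isOpen_ball
  have hball : ∀ n, Metric.ball (x n) (1/2) ⊆ interior (T n) := by
    intro n
    rw [hg n, interior_copy, ← IsometryEquiv.image_ball]
    exact Set.image_mono hballw
  have hxz : ∀ n, dist (x n) z ≤ 3 := by
    intro n
    obtain ⟨y, hyT, hyK⟩ := hTK n
    rw [hg n] at hyT
    obtain ⟨y0, hy0, rfl⟩ := hyT
    have h1 : dist (x n) (g n y0) ≤ 2 := by
      rw [hx]
      simp only [IsometryEquiv.dist_eq]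
      exact Metric.mem_closedBall'.mp (R₀_subset_closedBall hy0)
    have h2 : dist (g n y0) z ≤ 1 := Metric.mem_closedBall.mp hyK
    calc dist (x n) z ≤ dist (x n) (g n y0) + dist (g n y0) z := dist_triangle _ _ _
      _ ≤ 3 := by linarith
  have hsub : (⋃ n, interior (T n)) ⊆ Metric.closedBall z 6 := by
    refine Set.iUnion_subset fun n => ?_
    intro p hp
    have hpT : p ∈ T n := interior_subset hp
    rw [hg n] at hpT
    obtain ⟨p0, hp0, rfl⟩ := hpT
    have : dist (g n p0) (x n) ≤ 2 := by
      simp only [hx, IsometryEquiv.dist_eq]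
      exact Metric.mem_closedBall.mp (R₀_subset_closedBall hp0)
    have := dist_triangle (g n p0) (x n) z
    exact Metric.mem_closedBall.mpr (by have := hxz n; linarith)
  have hmeas : ∀ n, MeasurableSet (interior (T n)) := fun n =>
    isOpen_interior.measurableSet
  have hdisj' : Pairwise (Function.onFun Disjoint fun n => interior (T n)) := fun m n hmn =>
    hdisj (hTC m) (hTC n) (hne m n hmn)
  have h1 : volume (⋃ n, interior (T n)) = ∑' n, volume (interior (T n)) :=
    measure_iUnion hdisj' hmeas
  have hvol : ∀ n, volume (Metric.ball (0 : Plane) (1/2)) ≤ volume (interior (T n)) := by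
    intro n
    have : volume (Metric.ball (x n) (1/2)) = volume (Metric.ball (0 : Plane) (1/2)) := by
      rw [show Metric.ball (x n) (1/2) = (x n) +ᵥ Metric.ball (0 : Plane) (1/2) by
        rw [vadd_ball, vadd_eq_add, add_zero]]
      exact measure_vadd volume (x n) _
    rw [← this]
    exact measure_mono (hball n)
  have hpos : volume (Metric.ball (0 : Plane) (1/2)) ≠ 0 :=
    (measure_ball_pos volume 0 (by norm_num)).ne'
  have htop : (∑' n, volume (interior (T n))) = ⊤ := by
    refine top_unique ?_
    calc (⊤ : ENNReal) = ∑' _ : ℕ, volume (Metric.ball (0 : Plane) (1/2)) :=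
        (ENNReal.tsum_const_eq_top_of_ne_zero hpos).symm
      _ ≤ ∑' n, volume (interior (T n)) := ENNReal.tsum_le_tsum hvol
  have hfin : volume (⋃ n, interior (T n)) < ⊤ :=
    lt_of_le_of_lt (measure_mono hsub) measure_closedBall_lt_top
  rw [h1, htop] at hfin
  exact absurd hfin (lt_irrefl _)

end SqHD

namespace SqHD

set_option maxHeartbeats 1000000 in
lemma midpoint_apply (x y : Plane) (i : Fin 2) :
    midpoint ℝ x y i = (x i + y i) / 2 := by
  rw [midpoint_eq_smul_add]
  show (⅟(2:ℝ)) * (x i + y i) = _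
  rw [invOf_eq_inv]
  rw [inv_eq_one_div]
  ring

set_option maxHeartbeats 2000000 in
lemma main : ¬ TilesPlane R₀ := by
  rintro ⟨C, hcopy, hdisj, hcover⟩
  have h0 : (0 : Plane) ∈ ⋃₀ C := by rw [hcover]; trivial
  obtain ⟨T0, hT0C, -⟩ := h0
  obtain ⟨f, hf⟩ := hcopy T0 hT0C
  have hFfin := finite_tiles C hcopy hdisj (f c)
  set F := {T | T ∈ C ∧ (T ∩ Metric.closedBall (f c) 1).Nonempty} with hFdef
  set sq : ℝ → ℝ := fun u => Real.sqrt (1/4 - (u - 1/2)^2) with hsqdef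
  have hsqf : ∀ u ∈ Set.Icc (1/4:ℝ) (3/4),
      0 ≤ sq u ∧ sq u ≤ 1/2 ∧ (sq u)^2 = 1/4 - (u - 1/2)^2 := by
    rintro u ⟨h1, h2⟩
    have hA : 0 ≤ 1/4 - (u - 1/2)^2 := by nlinarith
    exact ⟨Real.sqrt_nonneg _, (Real.sqrt_le_left (by norm_num)).mpr (by nlinarith),
      Real.sq_sqrt hA⟩
  set su : ℝ → Plane := fun u => pt u (-(sq u)) with hsudef
  set qq : ℝ → ℕ → Plane := fun u n => pt u (-(sq u + 1/((n:ℝ)+2))) with hqqdef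
  have heps : ∀ n : ℕ, 0 < 1/((n:ℝ)+2) ∧ 1/((n:ℝ)+2) ≤ 1/2 := by
    intro n
    constructor
    · positivity
    · rw [div_le_div_iff₀ (by positivity) (by norm_num)]
      have : (0:ℝ) ≤ n := Nat.cast_nonneg n
      linarith
  -- basic facts about arc points
  have hsuD : ∀ u ∈ Set.Icc (1/4:ℝ) (3/4), su u ∈ Metric.closedBall c (1/2) := by
    intro u hu
    obtain ⟨ha, hb, hc2⟩ := hsqf u hu
    rw [mem_D]
    simp only [hsudef, pt0, pt1]
    nlinarith
  have hqnotR : ∀ u ∈ Set.Icc (1/4:ℝ) (3/4), ∀ n : ℕ, qq u n ∉ R₀ := by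
    intro u hu n
    obtain ⟨ha, hb, hc2⟩ := hsqf u hu
    obtain ⟨he1, he2⟩ := heps n
    apply not_mem_R₀
    · simp only [hqqdef, pt1]; nlinarith
    · simp only [hqqdef, pt0, pt1]; nlinarith
  have hqK : ∀ u ∈ Set.Icc (1/4:ℝ) (3/4), ∀ n : ℕ,
      f (qq u n) ∈ Metric.closedBall (f c) 1 := by
    intro u hu n
    obtain ⟨ha, hb, hc2⟩ := hsqf u hu
    obtain ⟨he1, he2⟩ := heps n
    rw [Metric.mem_closedBall, IsometryEquiv.dist_eq, dist_le_iff' (by norm_num)]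
    simp only [hqqdef, pt0, pt1, c]
    nlinarith
  have hqdist : ∀ u : ℝ, ∀ n : ℕ, dist (f (su u)) (f (qq u n)) = 1/((n:ℝ)+2) := by
    intro u n
    obtain ⟨he1, he2⟩ := heps n
    rw [IsometryEquiv.dist_eq, dist_eq']
    simp only [hsudef, hqqdef, pt0, pt1]
    rw [show u - u = 0 by ring, show -(sq u) - -(sq u + 1/((n:ℝ)+2)) = 1/((n:ℝ)+2) by ring]
    rw [show (0:ℝ)^2 + (1/((n:ℝ)+2))^2 = (1/((n:ℝ)+2))^2 by ring]
    exact Real.sqrt_sq he1.le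
  -- for each u there is another tile containing the arc point in its closure
  have harc : ∀ u ∈ Set.Icc (1/4:ℝ) (3/4),
      ∃ T, T ∈ F ∧ T ≠ T0 ∧ f (su u) ∈ closure T := by
    intro u hu
    have hex : ∀ n : ℕ, ∃ T ∈ C, f (qq u n) ∈ T := by
      intro n
      have : f (qq u n) ∈ ⋃₀ C := by rw [hcover]; trivial
      exact this
    choose Tn hTnC hTny using hex
    have hTnF : ∀ n, Tn n ∈ F := fun n =>
      ⟨hTnC n, ⟨f (qq u n), hTny n, hqK u hu n⟩⟩
    have hTnne : ∀ n, Tn n ≠ T0 := by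
      intro n hEq
      have hmem : f (qq u n) ∈ T0 := hEq ▸ hTny n
      rw [hf] at hmem
      obtain ⟨r, hr, hr2⟩ := hmem
      exact hqnotR u hu n (f.injective hr2 ▸ hr)
    haveI := hFfin.to_subtype
    obtain ⟨T', hT'⟩ := Finite.exists_infinite_fiber (fun n => (⟨Tn n, hTnF n⟩ : F))
    have hfib : {n | Tn n = (T' : Set Plane)}.Infinite := by
      refine (Set.infinite_coe_iff.mp hT').mono ?_
      intro n hn
      exact congrArg Subtype.val hn
    obtain ⟨n0, hn0⟩ := hfib.nonempty
    refine ⟨(T' : Set Plane), T'.2, ?_, ?_⟩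
    · intro hEq
      exact hTnne n0 (hn0.trans hEq)
    · rw [Metric.mem_closure_iff]
      intro ε hε
      obtain ⟨N, hN⟩ := exists_nat_gt (1/ε)
      obtain ⟨n, hn, hNn⟩ := hfib.exists_gt N
      refine ⟨f (qq u n), hn ▸ hTny n, ?_⟩
      rw [hqdist u n]
      have hN0 : (0:ℝ) < N + 2 := by positivity
      have h1 : 1/ε < (N:ℝ) + 2 := by linarith
      have h2 : (N:ℝ) + 2 ≤ (n:ℝ) + 2 := by
        have : (N:ℝ) ≤ n := Nat.cast_le.mpr hNn.le
        linarith
      rw [div_lt_iff₀ (by positivity)]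
      rw [div_lt_iff₀ hε] at h1
      nlinarith
  choose! TT hTTF hTTne hTTcl using harc
  have hIccInf : (Set.Icc (1/4:ℝ) (3/4)).Infinite :=
    Set.infinite_coe_iff.mp (Set.Icc.infinite (by norm_num))
  have hmaps : Set.MapsTo TT (Set.Icc (1/4:ℝ) (3/4)) (F \ {T0}) := by
    intro u hu
    exact ⟨hTTF u hu, hTTne u hu⟩
  obtain ⟨u, hu, v, hv, huv, hTuv⟩ :=
    hIccInf.exists_ne_map_eq_of_mapsTo hmaps (hFfin.diff (t := {T0}))
  set T := TT u with hTdef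
  have hTF : T ∈ F := hTTF u hu
  have hTne : T ≠ T0 := hTTne u hu
  have hclu : f (su u) ∈ closure T := hTTcl u hu
  have hclv : f (su v) ∈ closure T := by rw [hTuv]; exact hTTcl v hv
  -- midpoint lies in the interior of T0
  set m0 := midpoint ℝ (su u) (su v) with hm0def
  have hm0 : m0 ∈ Metric.ball c (1/2) := by
    obtain ⟨hau, hbu, hcu⟩ := hsqf u hu
    obtain ⟨hav, hbv, hcv⟩ := hsqf v hv
    rw [Metric.mem_ball, dist_lt_iff' (by norm_num)]
    rw [hm0def]
    rw [midpoint_apply, midpoint_apply]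
    simp only [hsudef, pt0, pt1, c]
    have huv2 : 0 < (u - v)^2 := by
      have : u - v ≠ 0 := sub_ne_zero.mpr huv
      positivity
    nlinarith [sq_nonneg (sq u - sq v)]
  set m : Plane := f m0 with hmdef
  have hmT0 : m ∈ interior T0 := by
    rw [hf, interior_copy]
    exact ⟨m0, interior_maximal
      (Metric.ball_subset_closedBall.trans closedBall_c_subset) Metric.isOpen_ball hm0, rfl⟩
  -- T is convex with nonempty interior
  obtain ⟨gT, hgT⟩ := hcopy T hTF.1
  have hTconv : Convex ℝ T := by rw [hgT]; exact convex_copy gT convex_R₀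
  have hmclT : m ∈ closure T := by
    have heq : m = midpoint ℝ (f (su u)) (f (su v)) := midpoint_copy f _ _
    rw [heq]
    exact (hTconv.closure).segment_subset hclu hclv (midpoint_mem_segment _ _)
  have hxint : gT w ∈ interior T := by
    rw [hgT, interior_copy]
    exact ⟨w, interior_maximal ball_w_subset Metric.isOpen_ball (Metric.mem_ball_self (by norm_num)), rfl⟩
  have hseg := hTconv.openSegment_interior_closure_subset_interior hxint hmclT
  obtain ⟨ε, hε, hballm⟩ := Metric.isOpen_iff.mp isOpen_interior m hmT0
  set D := dist (gT w) m with hDdef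
  have hD : 0 ≤ D := dist_nonneg
  set t := min (1/2 : ℝ) (ε/(2*(D+1))) with htdef
  have ht0 : 0 < t := lt_min (by norm_num) (by positivity)
  have ht1 : t < 1 := lt_of_le_of_lt (min_le_left _ _) (by norm_num)
  set z : Plane := t • (gT w) + (1-t) • m with hzdef
  have hz1 : z ∈ openSegment ℝ (gT w) m := ⟨t, 1-t, ht0, by linarith, by ring, rfl⟩
  have hz2 : dist z m = t * D := by
    rw [hzdef, hDdef, dist_eq_norm, dist_eq_norm]
    have h : t • (gT w) + (1-t) • m - m = t • (gT w - m) := by module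
    rw [h, norm_smul, Real.norm_eq_abs, abs_of_nonneg ht0.le]
  have hz3 : t * D < ε := by
    have h3 : t ≤ ε/(2*(D+1)) := min_le_right _ _
    have h4 : t * (2*(D+1)) ≤ ε := by
      rw [← le_div_iff₀ (by positivity)]
      exact h3
    nlinarith
  have hzT0 : z ∈ interior T0 := hballm (by rw [Metric.mem_ball, hz2]; exact hz3)
  have hzT : z ∈ interior T := hseg hz1
  exact Set.disjoint_left.mp (hdisj hTF.1 hT0C hTne) hzT hzT0

end SqHD

/-- The convex region formed by attaching a closed half-disc of diameter 1 to one side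
of a unit square does not tile the plane. -/
theorem square_plus_half_disc_not_tile :
    ¬ TilesPlane ({p : Plane | 0 ≤ p 0 ∧ p 0 ≤ 1 ∧ 0 ≤ p 1 ∧ p 1 ≤ 1} ∪
      {p : Plane | (p 0 - 1 / 2) ^ 2 + p 1 ^ 2 ≤ 1 / 4 ∧ p 1 ≤ 0}) := by
  exact SqHD.main
end

section
/- A 5×7 rectangle with three 1×1 unit squares attached to its boundary and one 1×1 unit square removed from its interior does not tile the plane. -/
open Metric Set

section Aux

/-- open axis-parallel box -/
def Box (a b c d : ℝ) : Set Plane := {p | a < p 0 ∧ p 0 < b ∧ c < p 1 ∧ p 1 < d}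

lemma isOpen_Box (a b c d : ℝ) : IsOpen (Box a b c d) := by
  have h0 : Continuous fun p : Plane => p 0 := (continuous_apply 0).comp (PiLp.continuous_ofLp _ _)
  have h1 : Continuous fun p : Plane => p 1 := (continuous_apply 1).comp (PiLp.continuous_ofLp _ _)
  have : Box a b c d = ((fun p : Plane => p 0) ⁻¹' (Ioo a b)) ∩ ((fun p : Plane => p 1) ⁻¹' (Ioo c d)) := by
    ext p; simp [Box, Ioo]; tauto
  rw [this]
  exact (isOpen_Ioo.preimage h0).inter (isOpen_Ioo.preimage h1)

lemma isClosed_CBox (a b c d : ℝ) :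
    IsClosed {p : Plane | a ≤ p 0 ∧ p 0 ≤ b ∧ c ≤ p 1 ∧ p 1 ≤ d} := by
  have h0 : Continuous fun p : Plane => p 0 := (continuous_apply 0).comp (PiLp.continuous_ofLp _ _)
  have h1 : Continuous fun p : Plane => p 1 := (continuous_apply 1).comp (PiLp.continuous_ofLp _ _)
  have : {p : Plane | a ≤ p 0 ∧ p 0 ≤ b ∧ c ≤ p 1 ∧ p 1 ≤ d}
      = ((fun p : Plane => p 0) ⁻¹' (Icc a b)) ∩ ((fun p : Plane => p 1) ⁻¹' (Icc c d)) := by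
    ext p; simp [Icc]; tauto
  rw [this]
  exact (isClosed_Icc.preimage h0).inter (isClosed_Icc.preimage h1)

lemma convex_Box (a b c d : ℝ) : Convex ℝ (Box a b c d) := by
  have l0 : IsLinearMap ℝ fun p : Plane => p 0 := ⟨fun _ _ => rfl, fun _ _ => rfl⟩
  have l1 : IsLinearMap ℝ fun p : Plane => p 1 := ⟨fun _ _ => rfl, fun _ _ => rfl⟩
  have : Box a b c d = {p : Plane | a < p 0} ∩ {p | p 0 < b} ∩ ({p | c < p 1} ∩ {p | p 1 < d}) := by
    ext p; simp [Box]; tauto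
  rw [this]
  exact ((convex_halfSpace_gt l0 a).inter (convex_halfSpace_lt l0 b)).inter
    ((convex_halfSpace_gt l1 c).inter (convex_halfSpace_lt l1 d))

lemma preconnected_Box (a b c d : ℝ) : IsPreconnected (Box a b c d) :=
  (convex_Box a b c d).isPreconnected

lemma mem_closure_Box {a b c d : ℝ} (hab : a < b) (hcd : c < d) {p : Plane}
    (h0 : a ≤ p 0) (h1 : p 0 ≤ b) (h2 : c ≤ p 1) (h3 : p 1 ≤ d) :
    p ∈ closure (Box a b c d) := by
  set m : Plane := !₂[(a+b)/2, (c+d)/2] with hm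
  rw [mem_closure_iff_seq_limit]
  refine ⟨fun n => p + ((n:ℝ)+1)⁻¹ • (m - p), fun n => ?_, ?_⟩
  · have ht0 : (0:ℝ) < ((n:ℝ)+1)⁻¹ := by positivity
    have ht1 : ((n:ℝ)+1)⁻¹ ≤ 1 := by
      rw [inv_le_one_iff₀]; right; linarith [Nat.cast_nonneg (α := ℝ) n]
    have e0 : (p + ((n:ℝ)+1)⁻¹ • (m - p)) 0 = p 0 + ((n:ℝ)+1)⁻¹ * (m 0 - p 0) := rfl
    have e1 : (p + ((n:ℝ)+1)⁻¹ • (m - p)) 1 = p 1 + ((n:ℝ)+1)⁻¹ * (m 1 - p 1) := rfl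
    have hm0 : m 0 = (a+b)/2 := rfl
    have hm1 : m 1 = (c+d)/2 := rfl
    refine ⟨?_, ?_, ?_, ?_⟩
    · show a < (p + ((n:ℝ)+1)⁻¹ • (m - p)) 0
      rw [e0, hm0]; nlinarith
    · show (p + ((n:ℝ)+1)⁻¹ • (m - p)) 0 < b
      rw [e0, hm0]; nlinarith
    · show c < (p + ((n:ℝ)+1)⁻¹ • (m - p)) 1
      rw [e1, hm1]; nlinarith
    · show (p + ((n:ℝ)+1)⁻¹ • (m - p)) 1 < d
      rw [e1, hm1]; nlinarith
  · have : Filter.Tendsto (fun n : ℕ => ((n:ℝ)+1)⁻¹) Filter.atTop (nhds 0) :=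
      tendsto_one_div_add_atTop_nhds_zero_nat.congr (by intro n; simp [one_div])
    have h4 := Filter.Tendsto.const_add p (Filter.Tendsto.smul_const this (m - p))
    simpa using h4

lemma mem_Box_iff {a b c d x y : ℝ} :
    (!₂[x, y] : Plane) ∈ Box a b c d ↔ (a < x ∧ x < b ∧ c < y ∧ y < d) := Iff.rfl

/-- Friedman's region -/
def R₀ : Set Plane :=
  (({p : Plane | 0 ≤ p 0 ∧ p 0 ≤ 7 ∧ 0 ≤ p 1 ∧ p 1 ≤ 5} \
      {p : Plane | 3 < p 0 ∧ p 0 < 4 ∧ 2 < p 1 ∧ p 1 < 3}) ∪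
    {p : Plane | 1 ≤ p 0 ∧ p 0 ≤ 2 ∧ 5 ≤ p 1 ∧ p 1 ≤ 6} ∪
    {p : Plane | 5 ≤ p 0 ∧ p 0 ≤ 6 ∧ 5 ≤ p 1 ∧ p 1 ≤ 6} ∪
    {p : Plane | 3 ≤ p 0 ∧ p 0 ≤ 4 ∧ -1 ≤ p 1 ∧ p 1 ≤ 0})

/-- the hole -/
def H₀ : Set Plane := Box 3 4 2 3

/-- a connected open kernel of R₀ -/
def U₀ : Set Plane :=
  Box 0 7 3 5 ∪ Box 1 2 4 6 ∪ Box 5 6 4 6 ∪ Box 0 3 0 5 ∪ Box 4 7 0 5 ∪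
    Box 0 7 0 2 ∪ Box 3 4 (-1) 1

/-- the exterior region -/
def E₀ : Set Plane := R₀ᶜ ∩ {p : Plane | 3 ≤ p 0 ∧ p 0 ≤ 4 ∧ 2 ≤ p 1 ∧ p 1 ≤ 3}ᶜ

lemma isOpen_U₀ : IsOpen U₀ := by
  unfold U₀
  repeat' apply IsOpen.union
  all_goals exact isOpen_Box _ _ _ _

lemma U₀_subset_R₀ : U₀ ⊆ R₀ := by
  intro p hp
  simp only [U₀, Box, mem_union, mem_setOf_eq] at hp
  simp only [R₀, mem_union, mem_diff, mem_setOf_eq]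
  rcases hp with ((((((h | h) | h) | h) | h) | h) | h)
  · exact Or.inl <| Or.inl <| Or.inl ⟨⟨by linarith [h.1], by linarith [h.2.1], by linarith [h.2.2.1], by linarith [h.2.2.2]⟩, fun hh => by linarith [hh.2.2.1, h.2.2.1]⟩
  · rcases le_or_gt (p 1) 5 with hy | hy
    · exact Or.inl <| Or.inl <| Or.inl ⟨⟨by linarith [h.1], by linarith [h.2.1], by linarith [h.2.2.1], hy⟩, fun hh => by linarith [hh.1, h.2.1]⟩
    · exact Or.inl <| Or.inl <| Or.inr ⟨by linarith [h.1], by linarith [h.2.1], by linarith, by linarith [h.2.2.2]⟩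
  · rcases le_or_gt (p 1) 5 with hy | hy
    · exact Or.inl <| Or.inl <| Or.inl ⟨⟨by linarith [h.1], by linarith [h.2.1], by linarith [h.2.2.1], hy⟩, fun hh => by linarith [hh.2.1, h.1]⟩
    · exact Or.inl <| Or.inr ⟨by linarith [h.1], by linarith [h.2.1], by linarith, by linarith [h.2.2.2]⟩
  · exact Or.inl <| Or.inl <| Or.inl ⟨⟨by linarith [h.1], by linarith [h.2.1], by linarith [h.2.2.1], by linarith [h.2.2.2]⟩, fun hh => by linarith [hh.1, h.2.1]⟩
  · exact Or.inl <| Or.inl <| Or.inl ⟨⟨by linarith [h.1], by linarith [h.2.1], by linarith [h.2.2.1], by linarith [h.2.2.2]⟩, fun hh => by linarith [hh.2.1, h.1]⟩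
  · exact Or.inl <| Or.inl <| Or.inl ⟨⟨by linarith [h.1], by linarith [h.2.1], by linarith [h.2.2.1], by linarith [h.2.2.2]⟩, fun hh => by linarith [hh.2.2.1, h.2.2.2]⟩
  · rcases le_or_gt 0 (p 1) with hy | hy
    · exact Or.inl <| Or.inl <| Or.inl ⟨⟨by linarith [h.1], by linarith [h.2.1], hy, by linarith [h.2.2.2]⟩, fun hh => by linarith [hh.2.2.1, h.2.2.2]⟩
    · exact Or.inr ⟨by linarith [h.1], by linarith [h.2.1], by linarith [h.2.2.1], by linarith⟩

lemma R₀_subset_closure_U₀ : R₀ ⊆ closure U₀ := by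
  have s1 : Box 0 7 3 5 ⊆ U₀ := fun q hq => Or.inl (Or.inl (Or.inl (Or.inl (Or.inl (Or.inl hq)))))
  have s2 : Box 1 2 4 6 ⊆ U₀ := fun q hq => Or.inl (Or.inl (Or.inl (Or.inl (Or.inl (Or.inr hq)))))
  have s3 : Box 5 6 4 6 ⊆ U₀ := fun q hq => Or.inl (Or.inl (Or.inl (Or.inl (Or.inr hq))))
  have s4 : Box 0 3 0 5 ⊆ U₀ := fun q hq => Or.inl (Or.inl (Or.inl (Or.inr hq)))
  have s5 : Box 4 7 0 5 ⊆ U₀ := fun q hq => Or.inl (Or.inl (Or.inr hq))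
  have s6 : Box 0 7 0 2 ⊆ U₀ := fun q hq => Or.inl (Or.inr hq)
  have s7 : Box 3 4 (-1) 1 ⊆ U₀ := fun q hq => Or.inr hq
  intro p hp
  simp only [R₀, mem_union, mem_diff, mem_setOf_eq] at hp
  rcases hp with (((⟨hrect, hhole⟩ | h) | h) | h)
  · rcases le_or_gt (p 0) 3 with hx | hx
    · exact closure_mono s4 (mem_closure_Box (by norm_num) (by norm_num) hrect.1 hx hrect.2.2.1 hrect.2.2.2)
    rcases le_or_gt 4 (p 0) with hx' | hx'
    · exact closure_mono s5 (mem_closure_Box (by norm_num) (by norm_num) hx' hrect.2.1 hrect.2.2.1 hrect.2.2.2)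
    rcases le_or_gt (p 1) 2 with hy | hy
    · exact closure_mono s6 (mem_closure_Box (by norm_num) (by norm_num) hrect.1 hrect.2.1 hrect.2.2.1 hy)
    rcases le_or_gt 3 (p 1) with hy' | hy'
    · exact closure_mono s1 (mem_closure_Box (by norm_num) (by norm_num) hrect.1 hrect.2.1 hy' hrect.2.2.2)
    exact absurd ⟨hx, hx', hy, hy'⟩ hhole
  · exact closure_mono s2 (mem_closure_Box (by norm_num) (by norm_num) h.1 h.2.1 (by linarith [h.2.2.1]) h.2.2.2)
  · exact closure_mono s3 (mem_closure_Box (by norm_num) (by norm_num) h.1 h.2.1 (by linarith [h.2.2.1]) h.2.2.2)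
  · exact closure_mono s7 (mem_closure_Box (by norm_num) (by norm_num) h.1 h.2.1 h.2.2.1 (by linarith [h.2.2.2]))

lemma preconnected_U₀ : IsPreconnected U₀ := by
  have hb : ∀ a b c d : ℝ, IsPreconnected (Box a b c d) := preconnected_Box
  have p1 : IsPreconnected (Box 0 7 3 5 ∪ Box 1 2 4 6) :=
    IsPreconnected.union (!₂[1.5, 4.5] : Plane) (mem_Box_iff.mpr (by norm_num))
      (mem_Box_iff.mpr (by norm_num)) (hb _ _ _ _) (hb _ _ _ _)
  have p2 : IsPreconnected (Box 0 7 3 5 ∪ Box 1 2 4 6 ∪ Box 5 6 4 6) :=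
    IsPreconnected.union (!₂[5.5, 4.5] : Plane) (Or.inl (mem_Box_iff.mpr (by norm_num)))
      (mem_Box_iff.mpr (by norm_num)) p1 (hb _ _ _ _)
  have p3 : IsPreconnected (Box 0 7 3 5 ∪ Box 1 2 4 6 ∪ Box 5 6 4 6 ∪ Box 0 3 0 5) :=
    IsPreconnected.union (!₂[0.5, 4] : Plane) (Or.inl (Or.inl (mem_Box_iff.mpr (by norm_num))))
      (mem_Box_iff.mpr (by norm_num)) p2 (hb _ _ _ _)
  have p4 : IsPreconnected (Box 0 7 3 5 ∪ Box 1 2 4 6 ∪ Box 5 6 4 6 ∪ Box 0 3 0 5 ∪ Box 4 7 0 5) :=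
    IsPreconnected.union (!₂[6, 4] : Plane)
      (Or.inl (Or.inl (Or.inl (mem_Box_iff.mpr (by norm_num)))))
      (mem_Box_iff.mpr (by norm_num)) p3 (hb _ _ _ _)
  have p5 : IsPreconnected (Box 0 7 3 5 ∪ Box 1 2 4 6 ∪ Box 5 6 4 6 ∪ Box 0 3 0 5 ∪ Box 4 7 0 5 ∪ Box 0 7 0 2) :=
    IsPreconnected.union (!₂[1, 1] : Plane)
      (Or.inl (Or.inr (mem_Box_iff.mpr (by norm_num))))
      (mem_Box_iff.mpr (by norm_num)) p4 (hb _ _ _ _)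
  exact IsPreconnected.union (!₂[3.5, 0.5] : Plane)
    (Or.inr (mem_Box_iff.mpr (by norm_num)))
    (mem_Box_iff.mpr (by norm_num)) p5 (hb _ _ _ _)

lemma isClosed_R₀ : IsClosed R₀ := by
  have h1 : IsClosed ({p : Plane | 0 ≤ p 0 ∧ p 0 ≤ 7 ∧ 0 ≤ p 1 ∧ p 1 ≤ 5} \
      {p : Plane | 3 < p 0 ∧ p 0 < 4 ∧ 2 < p 1 ∧ p 1 < 3}) := by
    rw [diff_eq]
    exact (isClosed_CBox 0 7 0 5).inter (isOpen_Box 3 4 2 3).isClosed_compl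
  exact h1.union (isClosed_CBox 1 2 5 6) |>.union (isClosed_CBox 5 6 5 6) |>.union (isClosed_CBox 3 4 (-1) 0)

lemma H₀_disjoint_R₀ : ∀ p ∈ H₀, p ∉ R₀ := by
  intro p hp hR
  simp only [H₀, Box, mem_setOf_eq] at hp
  simp only [R₀, mem_union, mem_diff, mem_setOf_eq] at hR
  rcases hR with (((⟨_, hhole⟩ | h) | h) | h)
  · exact hhole ⟨hp.1, hp.2.1, hp.2.2.1, hp.2.2.2⟩
  · linarith [h.2.2.1, hp.2.2.2]
  · linarith [h.2.2.1, hp.2.2.2]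
  · linarith [h.2.2.2, hp.2.2.1]

lemma compl_R₀_subset : R₀ᶜ ⊆ H₀ ∪ E₀ := by
  intro p hp
  by_cases hk : p ∈ {q : Plane | 3 ≤ q 0 ∧ q 0 ≤ 4 ∧ 2 ≤ q 1 ∧ q 1 ≤ 3}
  · left
    by_contra hH
    simp only [H₀, Box, mem_setOf_eq] at hH
    push_neg at hH
    apply hp
    simp only [R₀, mem_union, mem_diff, mem_setOf_eq]
    simp only [mem_setOf_eq] at hk
    refine Or.inl <| Or.inl <| Or.inl ⟨⟨by linarith [hk.1], by linarith [hk.2.1], by linarith [hk.2.2.1], by linarith [hk.2.2.2]⟩, ?_⟩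
    rintro ⟨a, b, c, d⟩
    have := hH a b c
    linarith
  · exact Or.inr ⟨hp, hk⟩

lemma disjoint_H₀_E₀ : Disjoint H₀ E₀ := by
  rw [Set.disjoint_left]
  intro p hp hpE
  simp only [H₀, Box, mem_setOf_eq] at hp
  exact hpE.2 ⟨le_of_lt hp.1, le_of_lt hp.2.1, le_of_lt hp.2.2.1, le_of_lt hp.2.2.2⟩

lemma isOpen_E₀ : IsOpen E₀ :=
  (isClosed_R₀.isOpen_compl).inter (isClosed_CBox 3 4 2 3).isOpen_compl

lemma interior_copy (e : Plane ≃ᵢ Plane) : interior (e '' R₀) = e '' interior R₀ :=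
  (e.toHomeomorph.image_interior R₀).symm

lemma U₀_subset_interior : U₀ ⊆ interior R₀ :=
  interior_maximal U₀_subset_R₀ isOpen_U₀

lemma copy_subset_closure_interior (e : Plane ≃ᵢ Plane) :
    e '' R₀ ⊆ closure (interior (e '' R₀)) := by
  rw [interior_copy]
  calc e '' R₀ ⊆ e '' closure U₀ := image_mono R₀_subset_closure_U₀
    _ = closure (e '' U₀) := e.toHomeomorph.image_closure U₀
    _ ⊆ closure (e '' interior R₀) := closure_mono (image_mono U₀_subset_interior)

lemma preconnected_interior_R₀ : IsPreconnected (interior R₀) :=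
  preconnected_U₀.subset_closure U₀_subset_interior
    (interior_subset.trans R₀_subset_closure_U₀)

end Aux

/-- Friedman's Heesch-number-1 example: a `5 × 7` rectangle with one `1 × 1` unit cell
removed from its interior and three `1 × 1` unit cells attached along its boundary
does not tile the plane. -/
theorem friedman_region_not_tile (R : Set Plane)
    (hR : R =
      (({p : Plane | 0 ≤ p 0 ∧ p 0 ≤ 7 ∧ 0 ≤ p 1 ∧ p 1 ≤ 5} \
          {p : Plane | 3 < p 0 ∧ p 0 < 4 ∧ 2 < p 1 ∧ p 1 < 3}) ∪
        {p : Plane | 1 ≤ p 0 ∧ p 0 ≤ 2 ∧ 5 ≤ p 1 ∧ p 1 ≤ 6} ∪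
        {p : Plane | 5 ≤ p 0 ∧ p 0 ≤ 6 ∧ 5 ≤ p 1 ∧ p 1 ≤ 6} ∪
        {p : Plane | 3 ≤ p 0 ∧ p 0 ≤ 4 ∧ -1 ≤ p 1 ∧ p 1 ≤ 0})) :
    ¬ TilesPlane R := by
  intro h
  rw [hR] at h
  have h' : TilesPlane R₀ := h
  obtain ⟨C, hcopy, hpair, huniv⟩ := h'
  -- pick some tile S containing the origin
  have h0 : (!₂[0, 0] : Plane) ∈ ⋃₀ C := by rw [huniv]; trivial
  obtain ⟨S, hSC, -⟩ := h0
  obtain ⟨f, hfS⟩ := hcopy S hSC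
  -- the center of the hole of S
  set x : Plane := f !₂[3.5, 2.5] with hx
  have hcH : (!₂[3.5, 2.5] : Plane) ∈ H₀ := mem_Box_iff.mpr (by norm_num)
  have hxh : x ∈ f '' H₀ := ⟨_, hcH, rfl⟩
  have hxS : x ∉ S := by
    rw [hfS]
    rintro ⟨y, hyR, hyx⟩
    exact H₀_disjoint_R₀ _ hcH (f.injective hyx ▸ hyR)
  -- the tile T covering x
  have hxU : x ∈ ⋃₀ C := by rw [huniv]; trivial
  obtain ⟨T, hTC, hxT⟩ := hxU
  have hTS : T ≠ S := fun hh => hxS (hh ▸ hxT)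
  have hdis : Disjoint (interior T) (interior S) := hpair hTC hSC hTS
  obtain ⟨g, hgT⟩ := hcopy T hTC
  set W : Set Plane := interior T with hW
  have hWopen : IsOpen W := isOpen_interior
  -- W is preconnected
  have hWpre : IsPreconnected W := by
    rw [hW, hgT, interior_copy g]
    exact preconnected_interior_R₀.image _ g.continuous.continuousOn
  -- W is disjoint from S
  have hWS : ∀ w ∈ W, w ∉ S := by
    intro w hw hwS
    have h1 : w ∈ closure (interior S) := by
      rw [hfS] at hwS ⊢; exact copy_subset_closure_interior f hwS
    rw [_root_.mem_closure_iff] at h1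
    obtain ⟨y, hyW, hyS⟩ := h1 W hWopen hw
    exact (Set.disjoint_left.mp hdis hyW) hyS
  -- hence W lies in the complement of S, which splits into hole and exterior
  have hWsub : W ⊆ f '' H₀ ∪ f '' E₀ := by
    intro w hw
    have hwS : w ∉ S := hWS w hw
    have : w ∈ f '' R₀ᶜ := by
      rw [Set.image_compl_eq f.bijective, ← hfS]; exact hwS
    obtain ⟨y, hyc, hyw⟩ := this
    rcases compl_R₀_subset hyc with hy | hy
    · exact Or.inl ⟨y, hy, hyw⟩
    · exact Or.inr ⟨y, hy, hyw⟩
  have hopenH : IsOpen (f '' H₀) := f.toHomeomorph.isOpen_image.mpr (isOpen_Box 3 4 2 3)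
  have hopenE : IsOpen (f '' E₀) := f.toHomeomorph.isOpen_image.mpr isOpen_E₀
  have hdisHE : Disjoint (f '' H₀) (f '' E₀) :=
    (Set.disjoint_image_iff f.injective).mpr disjoint_H₀_E₀
  -- W meets the hole of S
  have hWH : (W ∩ f '' H₀).Nonempty := by
    have hxc : x ∈ closure W := by
      rw [hW, hgT]; exact copy_subset_closure_interior g (hgT ▸ hxT)
    rw [_root_.mem_closure_iff] at hxc
    obtain ⟨y, hy1, hy2⟩ := hxc (f '' H₀) hopenH hxh
    exact ⟨y, hy2, hy1⟩
  -- so W is contained in the hole of S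
  have hWinH : W ⊆ f '' H₀ :=
    IsPreconnected.subset_left_of_subset_union hopenH hopenE hdisHE hWsub hWH hWpre
  -- but W contains two points at distance 3, while the hole has diameter < 3
  have hPW : g !₂[1, 1] ∈ W := by
    rw [hW, hgT, interior_copy g]
    exact ⟨_, U₀_subset_interior (Or.inl (Or.inl (Or.inl (Or.inr (mem_Box_iff.mpr (by norm_num)))))), rfl⟩
  have hQW : g !₂[1, 4] ∈ W := by
    rw [hW, hgT, interior_copy g]
    exact ⟨_, U₀_subset_interior (Or.inl (Or.inl (Or.inl (Or.inr (mem_Box_iff.mpr (by norm_num)))))), rfl⟩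
  obtain ⟨p', hp'H, hp'⟩ := hWinH hPW
  obtain ⟨q', hq'H, hq'⟩ := hWinH hQW
  have hd1 : dist (g (!₂[1, 1] : Plane)) (g !₂[1, 4]) = 3 := by
    rw [g.dist_eq, EuclideanSpace.dist_eq, Fin.sum_univ_two]
    norm_num [Real.dist_eq]
  have hd2 : dist (g (!₂[1, 1] : Plane)) (g !₂[1, 4]) < 3 := by
    rw [← hp', ← hq', f.dist_eq, EuclideanSpace.dist_eq, Fin.sum_univ_two]
    simp only [H₀, Box, mem_setOf_eq] at hp'H hq'H
    rw [Real.sqrt_lt' (by norm_num : (0:ℝ) < 3)]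
    have e0 : dist (p' 0) (q' 0) < 1 := by
      rw [Real.dist_eq, abs_lt]; constructor <;> [linarith [hp'H.1, hq'H.2.1]; linarith [hp'H.2.1, hq'H.1]]
    have e1 : dist (p' 1) (q' 1) < 1 := by
      rw [Real.dist_eq, abs_lt]; constructor <;> [linarith [hp'H.2.2.1, hq'H.2.2.2]; linarith [hp'H.2.2.2, hq'H.2.2.1]]
    nlinarith [(dist_nonneg : (0:ℝ) ≤ dist (p' 0) (q' 0)), (dist_nonneg : (0:ℝ) ≤ dist (p' 1) (q' 1))]
  linarith [hd1, hd2]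
end
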